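/- (Dependence measure of a linear random field.) Suppose the random field has the linear form ε_i^{(j)} = Σ_{u=−∞}^{∞} Σ_{v=−∞}^{∞} b_{u,i}^{(v),(j)} e_{i−u}^{(j−v)}, where the series converges in L^M for some M ≥ 1 and the b_{u,i}^{(v),(j)} are real coefficients. Then for all i, j, p, q, the coupled dependence quantity satisfies δ_{i,p,(M)}^{(j),(q)} = ‖ε_i^{(j)} − ε_{i,p}^{(j),(q)}‖_M ≤ 2 ‖e_{i+p}^{(j+q)}‖_M · |b_{−p,i}^{(−q),(j)}|. Consequently, if max_{i,j} |b_{p,i}^{(q),(j)}| ≤ C/(1+|p|+|q|)^α for all p,q and sup_{i,j} ‖e_i^{(j)}‖_M < ∞ and E ε_i^{(j)} = 0 and max_{i,j}‖ε_i^{(j)}‖_M < ∞, then {ε_i^{(j)}} is (M,α)-short range dependent. -/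

import Mathlib

open MeasureTheory ProbabilityTheory Filter

noncomputable section

variable {Ω : Type} [MeasurableSpace Ω]

/-- The `L^M` norm `‖Z‖_M = (E|Z|^M)^{1/M}`. -/
def rnorm (P : Measure Ω) (M : ℝ) (f : Ω → ℝ) : ℝ :=
  (∫ ω, |f ω| ^ M ∂P) ^ (1 / M)

/-- σ-field generated by a sub-family `{e_i^{(j)} : (i,j) ∈ C}` of a doubly indexed field. -/
def sigGen (e : ℤ → ℤ → Ω → ℝ) (C : Set (ℤ × ℤ)) : MeasurableSpace Ω :=
  ⨆ p ∈ C, MeasurableSpace.comap (e p.1 p.2) inferInstance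

/-- Window σ-field `H_{i,(a,b)}^{(j),(c,d)} = σ(e_x^{(y)} : i-a ≤ x ≤ i+b, j-c ≤ y ≤ j+d)`. -/
def Hwin (e : ℤ → ℤ → Ω → ℝ) (i j a b c d : ℤ) : MeasurableSpace Ω :=
  sigGen e {p : ℤ × ℤ | i - a ≤ p.1 ∧ p.1 ≤ i + b ∧ j - c ≤ p.2 ∧ p.2 ≤ j + d}

/-- Underlying data for a non-stationary random field `ε_i^{(j)} = G_{i,n}^{(j),m}(e_{i-u}^{(j-v)})`:
a doubly-indexed shift field `e`, an auxiliary independent copy field `edag` (all variables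
mutually independent, `edag i j` distributed as `e i j`), and location-dependent measurable
transformations `F i j`. -/
structure FieldSetup (Ω : Type) [MeasurableSpace Ω] (P : Measure Ω) where
  e : ℤ → ℤ → Ω → ℝ
  edag : ℤ → ℤ → Ω → ℝ
  F : ℤ → ℤ → ((ℤ × ℤ) → ℝ) → ℝ
  meas_e : ∀ i j, Measurable (e i j)
  meas_edag : ∀ i j, Measurable (edag i j)
  meas_F : ∀ i j, Measurable (F i j)
  indep : iIndepFun
    (Sum.elim (fun p : ℤ × ℤ => e p.1 p.2) (fun p : ℤ × ℤ => edag p.1 p.2)) P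
  ident : ∀ i j, IdentDistrib (edag i j) (e i j) P P

variable {P : Measure Ω}

/-- The random field `ε_i^{(j)} = G_{i,n}^{(j),m}(e_{i-u}^{(j-v)}; u,v ∈ ℤ)`. -/
def FieldSetup.eps (S : FieldSetup Ω P) (i j : ℤ) (ω : Ω) : ℝ :=
  S.F i j fun uv => S.e (i - uv.1) (j - uv.2) ω

/-- The coupled field `ε_{i,p}^{(j),(q)}`, obtained from `ε_i^{(j)}` by replacing the single
coordinate `e_{i+p}^{(j+q)}` with its independent copy `e_{i+p}^{(j+q)†}`. -/
def FieldSetup.epsC (S : FieldSetup Ω P) (i j p q : ℤ) (ω : Ω) : ℝ :=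
  S.F i j fun uv =>
    if i - uv.1 = i + p ∧ j - uv.2 = j + q then S.edag (i + p) (j + q) ω
    else S.e (i - uv.1) (j - uv.2) ω

/-- The dependence measure `δ_p^{(q)} = max_{1≤i≤n, 1≤j≤m} ‖ε_i^{(j)} - ε_{i,p}^{(j),(q)}‖_M`. -/
def FieldSetup.delta (S : FieldSetup Ω P) (M : ℝ) (n m : ℕ) (p q : ℤ) : ℝ :=
  sSup ((fun ij : ℤ × ℤ =>
      rnorm P M fun ω => S.eps ij.1 ij.2 ω - S.epsC ij.1 ij.2 p q ω) ''
    (Set.Icc 1 (n : ℤ) ×ˢ Set.Icc 1 (m : ℤ)))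

/-- `(M,α)`-short range dependence with constant `C₀`. -/
def FieldSetup.SRD (S : FieldSetup Ω P) (n m : ℕ) (M α C₀ : ℝ) : Prop :=
  (∀ i j : ℤ, 1 ≤ i → i ≤ n → 1 ≤ j → j ≤ m → ∫ ω, S.eps i j ω ∂P = 0) ∧
  (∀ i j : ℤ, 1 ≤ i → i ≤ n → 1 ≤ j → j ≤ m → rnorm P M (S.eps i j) ≤ C₀) ∧
  (∀ p q : ℤ, (1 + |(p : ℝ)| + |(q : ℝ)|) ^ α * S.delta M n m p q ≤ C₀)

/-- Conditional expectation `E[ε_i^{(j)} | H_{i,(a,b)}^{(j),(c,d)}]`. -/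
def FieldSetup.cexp (S : FieldSetup Ω P) (i j a b c d : ℤ) : Ω → ℝ :=
  P[S.eps i j | Hwin S.e i j a b c d]

/-- `Σ_{i=1}^n Σ_{j=1}^m a_i^{(j)2}`. -/
def sqSum (n m : ℕ) (a : ℤ → ℤ → ℝ) : ℝ :=
  ∑ i ∈ Finset.Icc (1 : ℤ) (n : ℤ), ∑ j ∈ Finset.Icc (1 : ℤ) (m : ℤ), (a i j) ^ 2

/-- The linear form `Σ_{i=1}^n Σ_{j=1}^m a_i^{(j)} ε_i^{(j)}`. -/
def linForm (S : FieldSetup Ω P) (n m : ℕ) (a : ℤ → ℤ → ℝ) (ω : Ω) : ℝ :=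
  ∑ i ∈ Finset.Icc (1 : ℤ) (n : ℤ), ∑ j ∈ Finset.Icc (1 : ℤ) (m : ℤ), a i j * S.eps i j ω

/-- Coefficient conditions (eq. (10) of the paper) with constant `C`, for bandwidth `K`,
number of positions `V` and positions `x v`, `y v`. -/
def CoeffCond (n m K V : ℕ) (x y : ℕ → ℤ) (a : ℕ → ℤ → ℤ → ℝ) (C : ℝ) : Prop :=
  (∀ v ∈ Finset.Icc 1 V, 0 < sqSum n m (a v)) ∧
  (∃ lam tau : ℕ → ℤ → ℝ,
    (∀ v i, 0 ≤ lam v i) ∧ (∀ v j, 0 ≤ tau v j) ∧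
    (∀ v ∈ Finset.Icc 1 V, ∀ i ∈ Finset.Icc (1 : ℤ) (n : ℤ), ∀ j ∈ Finset.Icc (1 : ℤ) (m : ℤ),
      |a v i j| / Real.sqrt (sqSum n m (a v)) ≤ lam v i * tau v j) ∧
    (∀ v ∈ Finset.Icc 1 V, ∑ i ∈ Finset.Icc (1 : ℤ) (n : ℤ), (lam v i) ^ 2 ≤ C) ∧
    (∀ v ∈ Finset.Icc 1 V, ∑ j ∈ Finset.Icc (1 : ℤ) (m : ℤ), (tau v j) ^ 2 ≤ C) ∧
    (∀ v i, lam v i ≤ C / Real.sqrt K) ∧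
    (∀ v j, tau v j ≤ C / Real.sqrt K)) ∧
  (∀ v ∈ Finset.Icc 1 V, ∀ i j : ℤ, ((K : ℤ) < |i - x v| ∨ (K : ℤ) < |j - y v|) → a v i j = 0)

/-- Lower bound `c₀` on the covariance quadratic form (eq. (11) of the paper). -/
def CovLB (S : FieldSetup Ω P) (n m : ℕ) (c₀ : ℝ) : Prop :=
  ∀ b : ℤ → ℤ → ℝ,
    c₀ * sqSum n m b ≤
      ∑ i₁ ∈ Finset.Icc (1 : ℤ) (n : ℤ), ∑ j₁ ∈ Finset.Icc (1 : ℤ) (m : ℤ),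
        ∑ i₂ ∈ Finset.Icc (1 : ℤ) (n : ℤ), ∑ j₂ ∈ Finset.Icc (1 : ℤ) (m : ℤ),
          b i₁ j₁ * b i₂ j₂ * ∫ ω, S.eps i₁ j₁ ω * S.eps i₂ j₂ ω ∂P

/-- `(ξ_1,…,ξ_V)` is a centered jointly Gaussian vector with covariance matrix `σ`:
every linear combination is Gaussian with mean `0` and the induced variance. -/
def IsGaussianVector {Ω' : Type} [MeasurableSpace Ω'] (P' : Measure Ω') (V : ℕ)
    (ξ : ℕ → Ω' → ℝ) (σ : ℕ → ℕ → ℝ) : Prop :=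
  (∀ v, Measurable (ξ v)) ∧
  ∀ c : ℕ → ℝ,
    Measure.map (fun ω => ∑ v ∈ Finset.Icc 1 V, c v * ξ v ω) P' =
      gaussianReal 0 (Real.toNNReal
        (∑ v₁ ∈ Finset.Icc 1 V, ∑ v₂ ∈ Finset.Icc 1 V, c v₁ * c v₂ * σ v₁ v₂))

/-- A variance kernel function (Definition 3 of the paper). -/
def IsVarKernel (K : ℝ → ℝ) : Prop :=
  (∀ x, K x ∈ Set.Icc (0 : ℝ) 1) ∧ (∀ x, K (-x) = K x) ∧ ContDiff ℝ 1 K ∧ K 0 = 1 ∧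
  AntitoneOn K (Set.Ici 0) ∧
  (∀ x : ℝ, (FourierTransform.fourier (fun t => (K t : ℂ)) x).im = 0 ∧
    0 ≤ (FourierTransform.fourier (fun t => (K t : ℂ)) x).re) ∧
  IntegrableOn (fun x => (K x) ^ 2) (Set.Ici 0) ∧
  IntegrableOn (fun x => x * K x) (Set.Ici 0)

/-- The rate `S(ℬ)` of Theorem 3: `ℬ^{5-α}` for `5 < α < 6`, `log ℬ / ℬ` for `α = 6`,
`1/ℬ` for `α > 6`. -/
def Sfun (α B : ℝ) : ℝ :=
  if α < 6 then B ^ (5 - α) else if α = 6 then Real.log B / B else 1 / B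



namespace Stmt18Aux

open ENNReal

variable {Ω : Type} [MeasurableSpace Ω] {P : Measure Ω}

lemma rnorm_nonneg (P : Measure Ω) (M : ℝ) (f : Ω → ℝ) : 0 ≤ rnorm P M f :=
  Real.rpow_nonneg (integral_nonneg fun ω => Real.rpow_nonneg (abs_nonneg _) M) _

lemma rnorm_congr_ae {M : ℝ} {f g : Ω → ℝ} (h : f =ᵐ[P] g) : rnorm P M f = rnorm P M g := by
  unfold rnorm
  congr 1
  refine integral_congr_ae ?_
  filter_upwards [h] with ω hω
  rw [hω]

lemma rnorm_const_mul {M : ℝ} (hM : 0 < M) (c : ℝ) (f : Ω → ℝ) :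
    rnorm P M (fun ω => c * f ω) = |c| * rnorm P M f := by
  unfold rnorm
  have h1 : ∀ ω, |c * f ω| ^ M = |c| ^ M * |f ω| ^ M := fun ω => by
    rw [abs_mul, Real.mul_rpow (abs_nonneg _) (abs_nonneg _)]
  simp_rw [h1, integral_const_mul]
  rw [Real.mul_rpow (Real.rpow_nonneg (abs_nonneg _) _)
      (integral_nonneg fun ω => Real.rpow_nonneg (abs_nonneg _) M),
    ← Real.rpow_mul (abs_nonneg c), mul_one_div_cancel hM.ne', Real.rpow_one]

lemma rnorm_eq_toReal (P : Measure Ω) {M : ℝ} (hM : 0 < M) {f : Ω → ℝ}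
    (hf : AEStronglyMeasurable f P) :
    rnorm P M f = (eLpNorm f (ENNReal.ofReal M) P).toReal := by
  have hp0 : ENNReal.ofReal M ≠ 0 := by
    simp [ENNReal.ofReal_eq_zero, not_le, hM]
  rw [rnorm, eLpNorm_eq_lintegral_rpow_enorm_toReal hp0 ENNReal.ofReal_ne_top,
    ENNReal.toReal_ofReal hM.le]
  have h1 : ∀ ω, ENNReal.ofReal (|f ω| ^ M) = (‖f ω‖₊ : ℝ≥0∞) ^ M := by
    intro ω
    rw [← Real.norm_eq_abs, ← ENNReal.ofReal_rpow_of_nonneg (norm_nonneg _) hM.le,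
      ofReal_norm, enorm_eq_nnnorm]
  rw [integral_eq_lintegral_of_nonneg_ae
      (Filter.Eventually.of_forall fun ω => Real.rpow_nonneg (abs_nonneg _) M)
      ((hf.norm.aemeasurable.pow_const M).congr
        (Filter.Eventually.of_forall fun ω => by simp [Real.norm_eq_abs])).aestronglyMeasurable]
  simp_rw [h1]
  rw [ENNReal.toReal_rpow]
  rfl

lemma lint_sub_finite [IsProbabilityMeasure P] {X Y : Ω → ℝ} (hX : Measurable X)
    (hY : Measurable Y) (hind : IndepFun X Y P) {M : ℝ} (hM : 0 < M)
    (h : ∫⁻ ω, (‖X ω - Y ω‖₊ : ℝ≥0∞) ^ M ∂P ≠ ∞) :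
    ∫⁻ ω, (‖X ω‖₊ : ℝ≥0∞) ^ M ∂P ≠ ∞ := by
  set μ := P.map X with hμdef
  set ν := P.map Y with hνdef
  have hμ : IsProbabilityMeasure μ := Measure.isProbabilityMeasure_map hX.aemeasurable
  have hν : IsProbabilityMeasure ν := Measure.isProbabilityMeasure_map hY.aemeasurable
  have hg : Measurable fun z : ℝ × ℝ => (‖z.1 - z.2‖₊ : ℝ≥0∞) ^ M :=
    ((measurable_fst.sub measurable_snd).nnnorm.coe_nnreal_ennreal).pow_const M
  have hmap : P.map (fun ω => (X ω, Y ω)) = μ.prod ν :=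
    (indepFun_iff_map_prod_eq_prod_map_map hX.aemeasurable hY.aemeasurable).mp hind
  have key : ∫⁻ ω, (‖X ω - Y ω‖₊ : ℝ≥0∞) ^ M ∂P
      = ∫⁻ y, ∫⁻ x, (‖x - y‖₊ : ℝ≥0∞) ^ M ∂μ ∂ν := by
    rw [← lintegral_map hg (hX.prodMk hY), hmap, lintegral_prod_symm' _ hg]
  rw [key] at h
  have hmeas : Measurable fun y => ∫⁻ x, (‖x - y‖₊ : ℝ≥0∞) ^ M ∂μ :=
    Measurable.lintegral_prod_left' hg
  have hae : ∀ᵐ y ∂ν, (∫⁻ x, (‖x - y‖₊ : ℝ≥0∞) ^ M ∂μ) < ∞ := ae_lt_top hmeas h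
  have hne : (MeasureTheory.ae ν).NeBot := ae_neBot.2 (IsProbabilityMeasure.ne_zero ν)
  obtain ⟨y₀, hy₀⟩ := hae.exists
  have hpt : ∀ x : ℝ, (‖x‖₊ : ℝ≥0∞) ^ M
      ≤ (2 : ℝ≥0∞) ^ M * ((‖x - y₀‖₊ : ℝ≥0∞) ^ M + (‖y₀‖₊ : ℝ≥0∞) ^ M) := by
    intro x
    have h1 : (‖x‖₊ : ℝ≥0∞) ≤ (‖x - y₀‖₊ : ℝ≥0∞) + (‖y₀‖₊ : ℝ≥0∞) := by
      have : ‖x‖₊ ≤ ‖x - y₀‖₊ + ‖y₀‖₊ := by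
        calc ‖x‖₊ = ‖(x - y₀) + y₀‖₊ := by rw [sub_add_cancel]
        _ ≤ ‖x - y₀‖₊ + ‖y₀‖₊ := nnnorm_add_le _ _
      exact_mod_cast this
    have h2 : (‖x - y₀‖₊ : ℝ≥0∞) + (‖y₀‖₊ : ℝ≥0∞)
        ≤ 2 * max (‖x - y₀‖₊ : ℝ≥0∞) (‖y₀‖₊ : ℝ≥0∞) := by
      rw [two_mul]
      exact add_le_add (le_max_left _ _) (le_max_right _ _)
    calc (‖x‖₊ : ℝ≥0∞) ^ M
        ≤ (2 * max (‖x - y₀‖₊ : ℝ≥0∞) (‖y₀‖₊ : ℝ≥0∞)) ^ M :=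
          ENNReal.rpow_le_rpow (h1.trans h2) hM.le
      _ = (2 : ℝ≥0∞) ^ M * (max (‖x - y₀‖₊ : ℝ≥0∞) (‖y₀‖₊ : ℝ≥0∞)) ^ M :=
          ENNReal.mul_rpow_of_nonneg _ _ hM.le
      _ ≤ (2 : ℝ≥0∞) ^ M * ((‖x - y₀‖₊ : ℝ≥0∞) ^ M + (‖y₀‖₊ : ℝ≥0∞) ^ M) := by
          gcongr
          rcases le_total ((‖x - y₀‖₊ : ℝ≥0∞)) ((‖y₀‖₊ : ℝ≥0∞)) with hle | hle
          · rw [max_eq_right hle]; exact le_add_self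
          · rw [max_eq_left hle]; exact self_le_add_right _ _
  have hmeas2 : Measurable fun x : ℝ => (‖x - y₀‖₊ : ℝ≥0∞) ^ M :=
    ((measurable_id.sub measurable_const).nnnorm.coe_nnreal_ennreal).pow_const M
  have hbig : ∫⁻ x, (‖x‖₊ : ℝ≥0∞) ^ M ∂μ < ∞ := by
    calc ∫⁻ x, (‖x‖₊ : ℝ≥0∞) ^ M ∂μ
        ≤ ∫⁻ x, (2 : ℝ≥0∞) ^ M * ((‖x - y₀‖₊ : ℝ≥0∞) ^ M + (‖y₀‖₊ : ℝ≥0∞) ^ M) ∂μ :=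
          lintegral_mono hpt
      _ = (2 : ℝ≥0∞) ^ M * ((∫⁻ x, (‖x - y₀‖₊ : ℝ≥0∞) ^ M ∂μ) + (‖y₀‖₊ : ℝ≥0∞) ^ M) := by
          rw [lintegral_const_mul (f := fun x : ℝ => (‖x - y₀‖₊ : ℝ≥0∞) ^ M + (‖y₀‖₊ : ℝ≥0∞) ^ M) _ (hmeas2.add measurable_const),
            lintegral_add_right _ measurable_const, lintegral_const, measure_univ, mul_one]
      _ < ∞ := by
          refine ENNReal.mul_lt_top ?_ ?_
          · exact ENNReal.rpow_lt_top_of_nonneg hM.le (by norm_num)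
          · exact ENNReal.add_lt_top.mpr
              ⟨hy₀, ENNReal.rpow_lt_top_of_nonneg hM.le ENNReal.coe_ne_top⟩
  rw [hμdef, lintegral_map ((measurable_nnnorm.coe_nnreal_ennreal).pow_const M) hX] at hbig
  exact hbig.ne

lemma rnorm_sub_le [IsProbabilityMeasure P] {X Y : Ω → ℝ} (hX : Measurable X)
    (hY : Measurable Y) (hind : IndepFun X Y P) (hid : IdentDistrib Y X P P) {M : ℝ}
    (hM : 1 ≤ M) :
    rnorm P M (fun ω => X ω - Y ω) ≤ 2 * rnorm P M X := by
  have hM0 : 0 < M := lt_of_lt_of_le one_pos hM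
  set p := ENNReal.ofReal M with hp
  have hp0 : p ≠ 0 := by simp [hp, ENNReal.ofReal_eq_zero, not_le, hM0]
  have hp1 : 1 ≤ p := by
    rw [hp, ← ENNReal.ofReal_one]
    exact ENNReal.ofReal_le_ofReal hM
  rw [rnorm_eq_toReal P hM0 (f := fun ω => X ω - Y ω) (hX.sub hY).aestronglyMeasurable,
    rnorm_eq_toReal P hM0 hX.aestronglyMeasurable]
  have hEY : eLpNorm Y p P = eLpNorm X p P := hid.eLpNorm_eq p
  rcases eq_or_ne (eLpNorm X p P) ∞ with hXi | hXf
  · have hlX : ∫⁻ ω, (‖X ω‖₊ : ℝ≥0∞) ^ M ∂P = ∞ := by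
      by_contra hne
      have : eLpNorm X p P < ∞ := by
        rw [eLpNorm_eq_lintegral_rpow_enorm_toReal hp0 ENNReal.ofReal_ne_top,
          ENNReal.toReal_ofReal hM0.le]
        exact ENNReal.rpow_lt_top_of_nonneg (by positivity) hne
      exact this.ne hXi
    have hlXY : ∫⁻ ω, (‖X ω - Y ω‖₊ : ℝ≥0∞) ^ M ∂P = ∞ := by
      by_contra hne
      exact lint_sub_finite hX hY hind hM0 hne hlX
    have hXYi : eLpNorm (fun ω => X ω - Y ω) p P = ∞ := by
      rw [eLpNorm_eq_lintegral_rpow_enorm_toReal hp0 ENNReal.ofReal_ne_top,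
        ENNReal.toReal_ofReal hM0.le]
      have : (∫⁻ ω, ‖(fun ω => X ω - Y ω) ω‖ₑ ^ M ∂P) = ∞ := hlXY
      rw [this, ENNReal.top_rpow_of_pos (by positivity)]
    simp [← hp, hXYi, hXi]
  · have htri : eLpNorm (fun ω => X ω - Y ω) p P ≤ 2 * eLpNorm X p P := by
      have h1 : eLpNorm (X - Y) p P ≤ eLpNorm X p P + eLpNorm Y p P :=
        eLpNorm_sub_le hX.aestronglyMeasurable hY.aestronglyMeasurable hp1
      calc eLpNorm (fun ω => X ω - Y ω) p P = eLpNorm (X - Y) p P := rfl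
        _ ≤ eLpNorm X p P + eLpNorm Y p P := h1
        _ = 2 * eLpNorm X p P := by rw [hEY, two_mul]
    have h2 : (2 : ℝ≥0∞) * eLpNorm X p P ≠ ∞ := ENNReal.mul_ne_top (by norm_num) hXf
    calc (eLpNorm (fun ω => X ω - Y ω) p P).toReal
        ≤ ((2 : ℝ≥0∞) * eLpNorm X p P).toReal := ENNReal.toReal_mono h2 htri
      _ = 2 * (eLpNorm X p P).toReal := by
          rw [ENNReal.toReal_mul]
          norm_num

end Stmt18Aux

open Stmt18Aux in
/-- Example 1: dependence measure of a linear random field, and the resulting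
`(M,α)`-short range dependence under polynomial decay of the coefficients. -/
theorem stmt18 {Ω : Type} [MeasurableSpace Ω] (P : Measure Ω) [IsProbabilityMeasure P]
    (S : FieldSetup Ω P) (n m : ℕ) (M : ℝ) (hM : 1 ≤ M)
    (b : ℤ → ℤ → ℤ → ℤ → ℝ)  -- b u i v j  =  b_{u,i}^{(v),(j)}
    -- the field has the linear form ε_i^{(j)} = Σ_{u,v} b_{u,i}^{(v),(j)} e_{i-u}^{(j-v)}
    (hF : ∀ (i j : ℤ) (f : ℤ × ℤ → ℝ),
      S.F i j f = ∑' uv : ℤ × ℤ, b uv.1 i uv.2 j * f uv)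
    -- the series converges (in particular a.s. summability)
    (hsum : ∀ i j : ℤ, ∀ᵐ ω ∂P,
      Summable fun uv : ℤ × ℤ => b uv.1 i uv.2 j * S.e (i - uv.1) (j - uv.2) ω) :
    -- first conclusion: δ_{i,p,(M)}^{(j),(q)} ≤ 2 ‖e_{i+p}^{(j+q)}‖_M |b_{-p,i}^{(-q),(j)}|
    (∀ i j p q : ℤ,
      rnorm P M (fun ω => S.eps i j ω - S.epsC i j p q ω)
        ≤ 2 * rnorm P M (S.e (i + p) (j + q)) * |b (-p) i (-q) j|) ∧
    -- second conclusion: SRD under polynomial decay of the coefficients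
    (∀ α C Ce Cε : ℝ, 0 < C → 0 < Ce →
      (∀ p i q j : ℤ, |b p i q j| ≤ C / (1 + |(p : ℝ)| + |(q : ℝ)|) ^ α) →
      (∀ i j : ℤ, rnorm P M (S.e i j) ≤ Ce) →
      (∀ i j : ℤ, 1 ≤ i → i ≤ (n : ℤ) → 1 ≤ j → j ≤ (m : ℤ) → ∫ ω, S.eps i j ω ∂P = 0) →
      (∀ i j : ℤ, 1 ≤ i → i ≤ (n : ℤ) → 1 ≤ j → j ≤ (m : ℤ) → rnorm P M (S.eps i j) ≤ Cε) →
      ∃ C₀ : ℝ, S.SRD n m M α C₀) := by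
  classical
  have hM0 : 0 < M := lt_of_lt_of_le one_pos hM
  have key : ∀ i j p q : ℤ,
      rnorm P M (fun ω => S.eps i j ω - S.epsC i j p q ω)
        ≤ 2 * rnorm P M (S.e (i + p) (j + q)) * |b (-p) i (-q) j| := by
    intro i j p q
    have hX := S.meas_e (i + p) (j + q)
    have hY := S.meas_edag (i + p) (j + q)
    have hae : (fun ω => S.eps i j ω - S.epsC i j p q ω)
        =ᵐ[P] fun ω => b (-p) i (-q) j *
          (S.e (i + p) (j + q) ω - S.edag (i + p) (j + q) ω) := by
      filter_upwards [hsum i j] with ω hω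
      have hdsum : Summable fun uv : ℤ × ℤ =>
          if uv = ((-p, -q) : ℤ × ℤ) then
            b (-p) i (-q) j * (S.edag (i + p) (j + q) ω - S.e (i + p) (j + q) ω)
          else 0 := by
        apply summable_of_ne_finset_zero (s := {((-p, -q) : ℤ × ℤ)})
        intro uv huv
        simp only [Finset.mem_singleton] at huv
        simp [huv]
      have hEq : ∀ uv : ℤ × ℤ,
          b uv.1 i uv.2 j *
            (if i - uv.1 = i + p ∧ j - uv.2 = j + q then S.edag (i + p) (j + q) ω
              else S.e (i - uv.1) (j - uv.2) ω)
          = b uv.1 i uv.2 j * S.e (i - uv.1) (j - uv.2) ω +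
            (if uv = ((-p, -q) : ℤ × ℤ) then
              b (-p) i (-q) j * (S.edag (i + p) (j + q) ω - S.e (i + p) (j + q) ω)
            else 0) := by
        intro uv
        rcases eq_or_ne uv ((-p, -q) : ℤ × ℤ) with h | h
        · subst h
          rw [if_pos rfl, if_pos (by constructor <;> simp)]
          have e1 : i - (-p, -q).1 = i + p := by simp
          have e2 : j - (-p, -q).2 = j + q := by simp
          rw [e1, e2]
          ring
        · have hcond : ¬(i - uv.1 = i + p ∧ j - uv.2 = j + q) := by
            rintro ⟨h1, h2⟩
            exact h (Prod.ext (by omega) (by omega))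
          rw [if_neg hcond, if_neg h, add_zero]
      simp only [FieldSetup.eps, FieldSetup.epsC, hF]
      rw [tsum_congr hEq, Summable.tsum_add hω hdsum, tsum_ite_eq]
      ring
    rw [rnorm_congr_ae hae, rnorm_const_mul hM0]
    have hind : IndepFun (S.e (i + p) (j + q)) (S.edag (i + p) (j + q)) P := by
      have := S.indep.indepFun
        (i := Sum.inl ((i + p, j + q) : ℤ × ℤ)) (j := Sum.inr ((i + p, j + q) : ℤ × ℤ))
        (by simp)
      exact this
    have h2 := rnorm_sub_le hX hY hind (S.ident (i + p) (j + q)) hM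
    calc |b (-p) i (-q) j| *
          rnorm P M (fun ω => S.e (i + p) (j + q) ω - S.edag (i + p) (j + q) ω)
        ≤ |b (-p) i (-q) j| * (2 * rnorm P M (S.e (i + p) (j + q))) :=
          mul_le_mul_of_nonneg_left h2 (abs_nonneg _)
      _ = 2 * rnorm P M (S.e (i + p) (j + q)) * |b (-p) i (-q) j| := by ring
  refine ⟨key, ?_⟩
  intro α C Ce Cε hC hCe hb he h0 hε
  refine ⟨max (max Cε 0) (2 * Ce * C), ?_, ?_, ?_⟩
  · intro i j h1 h2 h3 h4
    exact h0 i j h1 h2 h3 h4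
  · intro i j h1 h2 h3 h4
    exact le_trans (hε i j h1 h2 h3 h4) (le_max_of_le_left (le_max_left _ _))
  · intro p q
    have hbase : (0 : ℝ) < 1 + |(p : ℝ)| + |(q : ℝ)| := by positivity
    have hA : (0 : ℝ) < (1 + |(p : ℝ)| + |(q : ℝ)|) ^ α := Real.rpow_pos_of_pos hbase α
    have hdel : S.delta M n m p q ≤ 2 * Ce * C / (1 + |(p : ℝ)| + |(q : ℝ)|) ^ α := by
      apply Real.sSup_le
      · rintro x ⟨⟨i, j⟩, _, rfl⟩
        have h1 := key i j p q
        have h2 : rnorm P M (S.e (i + p) (j + q)) ≤ Ce := he _ _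
        have h3 : |b (-p) i (-q) j| ≤ C / (1 + |(p : ℝ)| + |(q : ℝ)|) ^ α := by
          have := hb (-p) i (-q) j
          simpa using this
        calc rnorm P M (fun ω => S.eps i j ω - S.epsC i j p q ω)
            ≤ 2 * rnorm P M (S.e (i + p) (j + q)) * |b (-p) i (-q) j| := h1
          _ ≤ 2 * Ce * (C / (1 + |(p : ℝ)| + |(q : ℝ)|) ^ α) := by
              apply mul_le_mul _ h3 (abs_nonneg _) (by positivity)
              have := rnorm_nonneg P M (S.e (i + p) (j + q))
              nlinarith
          _ = 2 * Ce * C / (1 + |(p : ℝ)| + |(q : ℝ)|) ^ α := by ring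
      · positivity
    calc (1 + |(p : ℝ)| + |(q : ℝ)|) ^ α * S.delta M n m p q
        ≤ (1 + |(p : ℝ)| + |(q : ℝ)|) ^ α *
            (2 * Ce * C / (1 + |(p : ℝ)| + |(q : ℝ)|) ^ α) :=
          mul_le_mul_of_nonneg_left hdel hA.le
      _ = 2 * Ce * C := by field_simp
      _ ≤ max (max Cε 0) (2 * Ce * C) := le_max_right _ _

end
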